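/- arXiv:1905.08120 — 3 statements merged into one kernel-verified Lean document; each statement's English description precedes it below -/
import Mathlib

section
/- Let m, n ≥ 1, let E ⊆ {0,…,m−1}×{0,…,n−1}, and let i₁ ≠ i₂ in {0,…,m−1} and j₁ ≠ j₂ in {0,…,n−1} be such that {j : (i₁,j) ∈ E} ⊆ {j : (i₂,j) ∈ E} and {i : (i,j₁) ∈ E} ⊆ {i : (i,j₂) ∈ E}. Let f : {0,…,m−1}→{0,…,m−1} be the map with f(i₁) = i₂ and f(i) = i for i ≠ i₁, and let g : {0,…,n−1}→{0,…,n−1} be the map with g(j₁) = j₂ and g(j) = j for j ≠ j₁. Then step(E, f, g) = E \ {(i₁, j₁)}. -/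
open Finset

/-- `Π·h`: the vector whose `q`-th entry is the union of the `Π p` over all `p` with `h p = q`. -/
def dotAct {n : ℕ} (Pi : Fin n → Finset ℕ) (h : Fin n → Fin n) : Fin n → Finset ℕ :=
  fun q => (Finset.univ.filter (fun p => h p = q)).biUnion Pi

/-- Entrywise union of two vectors of sets. -/
def vUnion {n : ℕ} (Pi Pi' : Fin n → Finset ℕ) : Fin n → Finset ℕ :=
  fun q => Pi q ∪ Pi' q

/-- `r = max (π₀ ∪ … ∪ π_{n−1})`. -/
def vMax {n : ℕ} (Pi : Fin n → Finset ℕ) : ℕ :=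
  (Finset.univ.sup Pi).sup id

/-- `Π↑`: add `r = max (π₀ ∪ … ∪ π_{n−1})` to every element of every entry. -/
def vUp {n : ℕ} (Pi : Fin n → Finset ℕ) : Fin n → Finset ℕ :=
  fun q => (Pi q).image (· + vMax Pi)

/-- A `k`-EXPcomposition of size `n`: pairwise disjoint entries whose union is `{1,…,2^k}`. -/
def IsEXP {n : ℕ} (k : ℕ) (Pi : Fin n → Finset ℕ) : Prop :=
  (∀ p q : Fin n, p ≠ q → Disjoint (Pi p) (Pi q)) ∧
    Finset.univ.sup Pi = Finset.Icc 1 (2 ^ k)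

/-- A `k`-Rvalid vector of size `n`. -/
def IsRvalid {n : ℕ} (k : ℕ) (ρ : Fin n → Finset ℕ) : Prop :=
  IsEXP k ρ ∧ (∀ p : Fin n, p.val = 0 → 1 ∈ ρ p) ∧
    ∀ k' < k, ∀ i ∈ Finset.Icc 1 (2 ^ k'), ∀ j ∈ Finset.Icc 1 (2 ^ k'),
      (∃ α, i ∈ ρ α ∧ j ∈ ρ α) → ∃ β, i + 2 ^ k' ∈ ρ β ∧ j + 2 ^ k' ∈ ρ β

/-- A `k`-Lvalid vector of size `m`. -/
def IsLvalid {m : ℕ} (k : ℕ) (lam : Fin m → Finset ℕ) : Prop :=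
  IsEXP k lam ∧ (∀ p : Fin m, p.val = 0 → 2 ^ k ∈ lam p) ∧
    ∀ k' < k, ∀ i ∈ Finset.Icc 1 (2 ^ k'), ∀ j ∈ Finset.Icc 1 (2 ^ k'),
      (∃ α, 2 ^ k + 1 - i ∈ lam α ∧ 2 ^ k + 1 - j ∈ lam α) →
        ∃ β, 2 ^ k + 1 - (i + 2 ^ k') ∈ lam β ∧ 2 ^ k + 1 - (j + 2 ^ k') ∈ lam β

/-- Number of nonempty entries of a vector of sets. -/
def nne {n : ℕ} (Pi : Fin n → Finset ℕ) : ℕ :=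
  (Finset.univ.filter (fun q => Pi q ≠ ∅)).card

/-- `succ(P) = {P ∪ (P·g)↑ : g}`. -/
def succSet {n : ℕ} (P : Fin n → Finset ℕ) : Finset (Fin n → Finset ℕ) :=
  (Finset.univ : Finset (Fin n → Fin n)).image (fun g => vUnion P (vUp (dotAct P g)))

/-- The graded set `U_{m,n}^{(k)}` of U-pairs. -/
def Uset (m n : ℕ) : ℕ → Set ((Fin m → Finset ℕ) × (Fin n → Finset ℕ))
  | 0 => {x | x = (fun p => if p.val = 0 then {1} else ∅,
                   fun q => if q.val = 0 then {1} else ∅)}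
  | k + 1 => {x | ∃ L P, (L, P) ∈ Uset m n k ∧ ∃ (f : Fin m → Fin m) (g : Fin n → Fin n),
      x = (vUnion (dotAct L f) (vUp L), vUnion P (vUp (dotAct P g)))}

/-- The `r`-Stirling number: partitions of `{1,…,a}` into `b` nonempty blocks
with `1,…,r` in pairwise distinct blocks. -/
noncomputable def rStirling (a b r : ℕ) : ℕ :=
  Set.ncard {C : Finset (Finset ℕ) |
    C.card = b ∧ (∅ ∉ C) ∧
    (∀ B ∈ C, ∀ B' ∈ C, B ≠ B' → Disjoint B B') ∧
    C.sup id = Finset.Icc 1 a ∧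
    ∀ x ∈ Finset.Icc 1 r, ∀ y ∈ Finset.Icc 1 r, x ≠ y →
      ∀ B ∈ C, x ∈ B → y ∉ B}

/-- The Stirling number of the second kind: the number of partitions of an
`a`-element set into `b` nonempty blocks. -/
noncomputable def stirling2 (a b : ℕ) : ℕ := rStirling a b 0

/-- The entry `s_n^{(i,j)}` (with `1 ≤ i,j ≤ n`). -/
noncomputable def sEntry (n i j : ℕ) : ℕ :=
  if i ≤ j then
    (j - i).factorial * Nat.choose (n - i) (j - i) *
      ∑ α ∈ Finset.Icc (j - i) i, Nat.choose i α * i ^ (i - α) * stirling2 α (j - i)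
  else 0

/-- The matrix `S_n`, with rows and columns indexed by `{1,…,n}`. -/
noncomputable def Smat (n : ℕ) : Matrix (Fin n) (Fin n) ℕ :=
  fun i j => sEntry n (i.val + 1) (j.val + 1)

/-- One step of the shuffle-automaton action on subsets of the grid. -/
def stepE {m n : ℕ} (E : Finset (Fin m × Fin n)) (f : Fin m → Fin m) (g : Fin n → Fin n) :
    Finset (Fin m × Fin n) :=
  E.image (fun p => (f p.1, p.2)) ∪ E.image (fun p => (p.1, g p.2))

/-- Reachability from `{(0,0)}` by finitely many steps. -/
def Reach {m n : ℕ} (hm : 0 < m) (hn : 0 < n) (E : Finset (Fin m × Fin n)) : Prop :=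
  Relation.ReflTransGen (fun E1 E2 => ∃ f g, E2 = stepE E1 f g)
    {(⟨0, hm⟩, ⟨0, hn⟩)} E

/-- Reachability from `{(0,0)}` in at most `t` steps. -/
def ReachIn {m n : ℕ} (hm : 0 < m) (hn : 0 < n) :
    ℕ → Finset (Fin m × Fin n) → Prop
  | 0, E => E = {(⟨0, hm⟩, ⟨0, hn⟩)}
  | t + 1, E => ReachIn hm hn t E ∨
      ∃ E' f g, ReachIn hm hn t E' ∧ E = stepE E' f g

/-- `s(Λ,P) = {(i,j) : λ_i ∩ ρ_j ≠ ∅}`. -/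
def sTab {m n : ℕ} (L : Fin m → Finset ℕ) (P : Fin n → Finset ℕ) :
    Finset (Fin m × Fin n) :=
  Finset.univ.filter (fun p => (L p.1 ∩ P p.2).Nonempty)

section RedirectLine

variable {α β : Type*} [DecidableEq α] [DecidableEq β]

theorem Finset.image_redirect_fst (E : Finset (α × β)) {i₁ i₂ : α} (hi : i₁ ≠ i₂)
    (hrow : ∀ j, (i₁, j) ∈ E → (i₂, j) ∈ E) :
    E.image (fun p => (if p.1 = i₁ then i₂ else p.1, p.2)) = E.filter (·.1 ≠ i₁) := by
  ext ⟨a, b⟩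
  simp only [mem_image, mem_filter, Prod.exists, Prod.mk.injEq]
  constructor
  · rintro ⟨i, j, hij, hf, rfl⟩
    split_ifs at hf with h
    · subst h hf
      exact ⟨hrow j hij, hi.symm⟩
    · exact hf ▸ ⟨hij, h⟩
  · rintro ⟨hab, ha⟩
    exact ⟨a, b, hab, if_neg ha, rfl⟩

theorem Finset.image_redirect_snd (E : Finset (α × β)) {j₁ j₂ : β} (hj : j₁ ≠ j₂)
    (hcol : ∀ i, (i, j₁) ∈ E → (i, j₂) ∈ E) :
    E.image (fun p => (p.1, if p.2 = j₁ then j₂ else p.2)) = E.filter (·.2 ≠ j₁) := by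
  ext ⟨a, b⟩
  simp only [mem_image, mem_filter, Prod.exists, Prod.mk.injEq]
  constructor
  · rintro ⟨i, j, hij, rfl, hg⟩
    split_ifs at hg with h
    · subst h hg
      exact ⟨hcol i hij, hj.symm⟩
    · exact hg ▸ ⟨hij, h⟩
  · rintro ⟨hab, hb⟩
    exact ⟨a, b, hab, rfl, if_neg hb⟩

theorem Finset.filter_fst_ne_union_filter_snd_ne (E : Finset (α × β)) (i₁ : α) (j₁ : β) :
    E.filter (·.1 ≠ i₁) ∪ E.filter (·.2 ≠ j₁) = E.erase (i₁, j₁) := by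
  rw [← filter_or, ← filter_ne']
  simp only [ne_eq, Prod.ext_iff, not_and_or]

end RedirectLine

theorem stmt17_general (m n : ℕ)
    (E : Finset (Fin m × Fin n)) (i₁ i₂ : Fin m) (j₁ j₂ : Fin n)
    (hi : i₁ ≠ i₂) (hj : j₁ ≠ j₂)
    (hrow : ∀ j : Fin n, (i₁, j) ∈ E → (i₂, j) ∈ E)
    (hcol : ∀ i : Fin m, (i, j₁) ∈ E → (i, j₂) ∈ E) :
    stepE E (fun i => if i = i₁ then i₂ else i) (fun j => if j = j₁ then j₂ else j) =
      E.erase (i₁, j₁) := by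
  rw [stepE, image_redirect_fst E hi hrow, image_redirect_snd E hj hcol,
    filter_fst_ne_union_filter_snd_ne]

theorem stmt17 (m n : ℕ) (hm : 1 ≤ m) (hn : 1 ≤ n)
    (E : Finset (Fin m × Fin n)) (i₁ i₂ : Fin m) (j₁ j₂ : Fin n)
    (hi : i₁ ≠ i₂) (hj : j₁ ≠ j₂)
    (hrow : ∀ j : Fin n, (i₁, j) ∈ E → (i₂, j) ∈ E)
    (hcol : ∀ i : Fin m, (i, j₁) ∈ E → (i, j₂) ∈ E) :
    stepE E (fun i => if i = i₁ then i₂ else i) (fun j => if j = j₁ then j₂ else j) =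
      E.erase (i₁, j₁) :=
  stmt17_general m n E i₁ i₂ j₁ j₂ hi hj hrow hcol
end

section
/- For all m, n ≥ 1, every subset E of {0,…,m−1}×{0,…,n−1} for which there exist i ∈ {0,…,m−1} and j ∈ {0,…,n−1} with ({i}×{0,…,n−1}) ∪ ({0,…,m−1}×{j}) ⊆ E is reachable. -/
open Finset

/-!
Copying a row (or column) of a product set onto a new index enlarges it by one row (column), so
from `(0,0)` the whole grid is reachable. If `G` contains row `i` and column `j`, redirecting
row `a` to `i` and column `b` to `j` removes exactly `(a, b)` from `G`: every other point of `G`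
is either fixed or sent into the cross. Removing the points of `Eᶜ` one at a time reaches `E`.
-/

section StepE

variable {m n : ℕ}

theorem stepE_update_id_prod {s : Finset (Fin m)} {t : Finset (Fin n)} {a : Fin m} (ha : a ∈ s)
    (x : Fin m) : stepE (s ×ˢ t) (Function.update id a x) id = insert x s ×ˢ t := by
  ext ⟨y, z⟩
  simp only [stepE, mem_union, mem_image, mem_product, mem_insert, Prod.exists, Prod.mk.injEq,
    Function.update_apply, id_eq]
  constructor
  · grind
  · rintro ⟨rfl | hy, hz⟩
    · exact Or.inl ⟨a, z, ⟨ha, hz⟩, by simp, rfl⟩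
    · exact Or.inr ⟨y, z, ⟨hy, hz⟩, rfl, rfl⟩

theorem stepE_prod_id_update {s : Finset (Fin m)} {t : Finset (Fin n)} {b : Fin n} (hb : b ∈ t)
    (x : Fin n) : stepE (s ×ˢ t) id (Function.update id b x) = s ×ˢ insert x t := by
  ext ⟨y, z⟩
  simp only [stepE, mem_union, mem_image, mem_product, mem_insert, Prod.exists, Prod.mk.injEq,
    Function.update_apply, id_eq]
  constructor
  · grind
  · rintro ⟨hy, rfl | hz⟩
    · exact Or.inr ⟨y, b, ⟨hy, hb⟩, rfl, by simp⟩
    · exact Or.inl ⟨y, z, ⟨hy, hz⟩, rfl, rfl⟩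

theorem stepE_update_update_eq_erase {G : Finset (Fin m × Fin n)} {i a : Fin m} {j b : Fin n}
    (hi : ∀ v, (i, v) ∈ G) (hj : ∀ u, (u, j) ∈ G) (ha : a ≠ i) (hb : b ≠ j) :
    stepE G (Function.update id a i) (Function.update id b j) = G.erase (a, b) := by
  ext ⟨x, y⟩
  simp only [stepE, mem_union, mem_image, mem_erase, Prod.exists, Prod.mk.injEq,
    Function.update_apply, id_eq]
  grind

end StepE

namespace Reach

variable {m n : ℕ} {hm : 0 < m} {hn : 0 < n}

theorem step {E : Finset (Fin m × Fin n)} (h : Reach hm hn E) (f : Fin m → Fin m)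
    (g : Fin n → Fin n) : Reach hm hn (stepE E f g) :=
  h.tail ⟨f, g, rfl⟩

theorem union_prod {s : Finset (Fin m)} {t : Finset (Fin n)} (h : Reach hm hn (s ×ˢ t))
    (hs : s.Nonempty) (u : Finset (Fin m)) : Reach hm hn ((u ∪ s) ×ˢ t) := by
  obtain ⟨a, ha⟩ := hs
  induction u using Finset.induction_on with
  | empty => simpa using h
  | @insert x u _ ih =>
    rw [insert_union, ← stepE_update_id_prod (mem_union_right u ha)]
    exact ih.step _ _

theorem prod_union {s : Finset (Fin m)} {t : Finset (Fin n)} (h : Reach hm hn (s ×ˢ t))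
    (ht : t.Nonempty) (u : Finset (Fin n)) : Reach hm hn (s ×ˢ (u ∪ t)) := by
  obtain ⟨b, hb⟩ := ht
  induction u using Finset.induction_on with
  | empty => simpa using h
  | @insert x u _ ih =>
    rw [insert_union, ← stepE_prod_id_update (mem_union_right u hb)]
    exact ih.step _ _

theorem univ : Reach hm hn (Finset.univ : Finset (Fin m × Fin n)) := by
  have h₀ : Reach hm hn ({(⟨0, hm⟩ : Fin m)} ×ˢ {(⟨0, hn⟩ : Fin n)}) := by
    rw [singleton_product_singleton]
    exact .refl
  simpa using (h₀.union_prod (singleton_nonempty _) .univ).prod_union (singleton_nonempty _) .univ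

theorem compl {D : Finset (Fin m × Fin n)} {i : Fin m} {j : Fin n}
    (hD : ∀ p ∈ D, p.1 ≠ i ∧ p.2 ≠ j) : Reach hm hn Dᶜ := by
  induction D using Finset.induction_on with
  | empty => simpa using univ
  | @insert p D _ ih =>
    have hp := hD p (mem_insert_self p D)
    have hD' : ∀ q ∈ D, q.1 ≠ i ∧ q.2 ≠ j := fun q hq => hD q (mem_insert_of_mem hq)
    have hi : ∀ v, (i, v) ∈ Dᶜ := fun v => mem_compl.2 fun hv => (hD' _ hv).1 rfl
    have hj : ∀ u, (u, j) ∈ Dᶜ := fun u => mem_compl.2 fun hu => (hD' _ hu).2 rfl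
    rw [compl_insert, ← stepE_update_update_eq_erase hi hj hp.1 hp.2]
    exact (ih hD').step _ _

end Reach

theorem stmt18 (m n : ℕ) (hm : 0 < m) (hn : 0 < n) (E : Finset (Fin m × Fin n))
    (h : ∃ (i : Fin m) (j : Fin n),
      (∀ j' : Fin n, (i, j') ∈ E) ∧ (∀ i' : Fin m, (i', j) ∈ E)) :
    Reach hm hn E := by
  obtain ⟨i, j, hi, hj⟩ := h
  have hEc : ∀ p ∈ Eᶜ, p.1 ≠ i ∧ p.2 ≠ j := by
    rintro ⟨a, b⟩ hp
    exact ⟨by rintro rfl; exact mem_compl.1 hp (hi b), by rintro rfl; exact mem_compl.1 hp (hj a)⟩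
  simpa using Reach.compl (hm := hm) (hn := hn) hEc
end

section
/- For every n ≥ 1 and every permutation σ of {0,…,n−1}, the subset E_σ = {(i, σ(i)) : i ∈ {0,…,n−1}} of {0,…,n−1}×{0,…,n−1} is reachable, and it can be reached from {(0,0)} using at most ⌈log₂(n+1)⌉ steps. -/
open Finset

-- permutation mapping one finset onto another of equal card, with a prescribed value
lemma exists_perm_image {n : ℕ} {A S : Finset (Fin n)} (h : A.card = S.card) :
    ∃ π : Equiv.Perm (Fin n), A.image (π : Fin n → Fin n) = S := by
  classical
  have h1 : Fintype.card (↥A) = Fintype.card (↥S) := by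
    simpa [Fintype.card_coe] using h
  have h2 : Fintype.card {a : Fin n // ¬ a ∈ A} = Fintype.card {a : Fin n // ¬ a ∈ S} := by
    have := Fintype.card_subtype_compl (fun a : Fin n => a ∈ A)
    have := Fintype.card_subtype_compl (fun a : Fin n => a ∈ S)
    simp only [Fintype.card_subtype_compl, Fintype.card_coe] at *
    omega
  let e1 : (↥A) ≃ (↥S) := Fintype.equivOfCardEq h1
  let e2 : {a : Fin n // ¬ a ∈ A} ≃ {a : Fin n // ¬ a ∈ S} := Fintype.equivOfCardEq h2
  let π : Equiv.Perm (Fin n) :=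
    ((Equiv.sumCompl (· ∈ A)).symm.trans ((Equiv.sumCongr e1 e2).trans
      (Equiv.sumCompl (· ∈ S))))
  refine ⟨π, ?_⟩
  have hmem : ∀ a ∈ A, π a ∈ S := by
    intro a ha
    have : (Equiv.sumCompl (· ∈ A)).symm a = Sum.inl ⟨a, ha⟩ :=
      Equiv.sumCompl_symm_apply_of_pos ha
    simp only [π, Equiv.trans_apply, this, Equiv.sumCongr_apply, Sum.map_inl,
      Equiv.sumCompl_apply_inl]
    exact (e1 ⟨a, ha⟩).2
  have hinj : Function.Injective (π : Fin n → Fin n) := π.injective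
  apply Finset.eq_of_subset_of_card_le
  · intro x hx
    simp only [Finset.mem_image] at hx
    obtain ⟨a, ha, rfl⟩ := hx
    exact hmem a ha
  · rw [Finset.card_image_of_injective _ hinj, h]

lemma exists_perm_image' {n : ℕ} {A S : Finset (Fin n)} (h : A.card = S.card)
    {a₀ s₀ : Fin n} (ha : a₀ ∈ A) (hs : s₀ ∈ S) :
    ∃ π : Equiv.Perm (Fin n), A.image (π : Fin n → Fin n) = S ∧ π a₀ = s₀ := by
  classical
  obtain ⟨π, hπ⟩ := exists_perm_image h
  have hπa : π a₀ ∈ S := hπ ▸ Finset.mem_image_of_mem _ ha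
  refine ⟨π.trans (Equiv.swap s₀ (π a₀)), ?_, by simp [Equiv.swap_apply_right]⟩
  have : A.image (⇑(π.trans (Equiv.swap s₀ (π a₀)))) = S.image (⇑(Equiv.swap s₀ (π a₀))) := by
    rw [← hπ, Finset.image_image]; rfl
  rw [this]
  apply Finset.eq_of_subset_of_card_le
  · intro x hx
    simp only [Finset.mem_image] at hx
    obtain ⟨a, haS, rfl⟩ := hx
    rcases eq_or_ne a s₀ with rfl | h1
    · rw [Equiv.swap_apply_left]; exact hπa
    rcases eq_or_ne a (π a₀) with rfl | h2
    · rw [Equiv.swap_apply_right]; exact hs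
    · rw [Equiv.swap_apply_of_ne_of_ne h1 h2]; exact haS
  · rw [Finset.card_image_of_injective _ (Equiv.injective _)]

-- covering split
lemma exists_cover {α : Type*} [DecidableEq α] (D : Finset α) :
    ∃ X Y : Finset α, X ⊆ D ∧ Y ⊆ D ∧ X ∪ Y = D ∧
      X.card = (D.card + 1) / 2 ∧ Y.card = (D.card + 1) / 2 := by
  obtain ⟨X, hXD, hX⟩ := Finset.exists_subset_card_eq
    (show (D.card + 1) / 2 ≤ D.card by omega)
  obtain ⟨Y, hDXY, hYD, hY⟩ := Finset.exists_subsuperset_card_eq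
    (Finset.sdiff_subset (s := D) (t := X))
    (show (D \ X).card ≤ (D.card + 1) / 2 by
      have := Finset.card_sdiff_of_subset hXD; omega)
    (by omega)
  refine ⟨X, Y, hXD, hYD, ?_, hX, hY⟩
  apply Finset.Subset.antisymm
  · exact Finset.union_subset hXD hYD
  · intro a ha
    by_cases h : a ∈ X
    · exact Finset.mem_union_left _ h
    · exact Finset.mem_union_right _ (hDXY (Finset.mem_sdiff.mpr ⟨ha, h⟩))





lemma step_lemma {n : ℕ} (υ π : Equiv.Perm (Fin n)) (A : Finset (Fin n)) :
    stepE (A.image (fun i => (i, υ (π i)))) (⇑π) (fun j => υ (π.symm (υ.symm j)))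
      = (A ∪ A.image ⇑π).image (fun i => (i, υ i)) := by
  unfold stepE
  rw [Finset.image_union, Finset.image_image, Finset.image_image, Finset.image_image,
    Finset.union_comm]
  congr 1
  refine Finset.image_congr fun x _ => ?_
  simp

lemma reach_of_reachIn {m n : ℕ} (hm : 0 < m) (hn : 0 < n) :
    ∀ (t : ℕ) (E : Finset (Fin m × Fin n)), ReachIn hm hn t E → Reach hm hn E := by
  intro t
  induction t with
  | zero => intro E h; simp only [ReachIn] at h; rw [h]; exact Relation.ReflTransGen.refl
  | succ t ih =>
    intro E h
    simp only [ReachIn] at h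
    rcases h with h | ⟨E', f, g, h1, h2⟩
    · exact ih E h
    · exact (ih E' h1).tail ⟨f, g, h2⟩

lemma reach_key {n : ℕ} (hn : 0 < n) :
    ∀ (s : ℕ) (υ : Equiv.Perm (Fin n)) (B : Finset (Fin n)),
      (⟨0, hn⟩ : Fin n) ∈ B → υ.symm ⟨0, hn⟩ ∈ B → B.card ≤ 2 ^ s →
      (υ.symm ⟨0, hn⟩ = ⟨0, hn⟩ → B.card < 2 ^ s ∨ s = 0) →
      ReachIn hn hn s (B.image (fun i => (i, υ i))) := by
  classical
  intro s
  induction s with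
  | zero =>
    intro υ B hzB hcB hcard _
    have hB : B = {(⟨0, hn⟩ : Fin n)} := by
      apply Finset.eq_singleton_iff_unique_mem.mpr
      exact ⟨hzB, fun x hx => Finset.card_le_one.mp (by simpa using hcard) x hx _ hzB⟩
    subst hB
    have hc : υ.symm ⟨0, hn⟩ = ⟨0, hn⟩ := by simpa using hcB
    have hυ : υ ⟨0, hn⟩ = ⟨0, hn⟩ := by conv_lhs => rw [← hc]; simp
    show _ = _
    simp [hυ]
  | succ s ih =>
    intro υ B hzB hcB hcard hstrict
    set z : Fin n := ⟨0, hn⟩ with hz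
    set c : Fin n := υ.symm z with hcdef
    set B₀ : Finset (Fin n) := (B.erase z).erase c with hB₀
    obtain ⟨X, Y, hXD, hYD, hXY, hXcard, hYcard⟩ := exists_cover B₀
    set A : Finset (Fin n) := insert z X with hA
    set S : Finset (Fin n) := insert c Y with hS
    have hzX : z ∉ X := fun h => (Finset.mem_erase.mp (Finset.mem_of_mem_erase (hXD h))).1 rfl
    have hcY : c ∉ Y := fun h => (Finset.mem_erase.mp (hYD h)).1 rfl
    have hAcard : A.card = X.card + 1 := Finset.card_insert_of_notMem hzX
    have hScard : S.card = Y.card + 1 := Finset.card_insert_of_notMem hcY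
    have hAS : A.card = S.card := by rw [hAcard, hScard, hXcard, hYcard]
    have hpow : 2 ^ (s + 1) = 2 * 2 ^ s := by ring
    -- B₀ card bound
    have hB₀card : B₀.card + 2 ≤ 2 ^ (s + 1) := by
      by_cases hc : c = z
      · have h1 : B₀ = B.erase z := by rw [hB₀, hc, Finset.erase_idem]
        have h2 : B₀.card = B.card - 1 := by rw [h1, Finset.card_erase_of_mem hzB]
        have h3 : B.card < 2 ^ (s + 1) := by
          rcases hstrict hc with h | h
          · exact h
          · omega
        have hBpos : 0 < B.card := Finset.card_pos.mpr ⟨z, hzB⟩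
        omega
      · have hcz : c ∈ B.erase z := Finset.mem_erase.mpr ⟨hc, hcB⟩
        have h2 : B₀.card = (B.erase z).card - 1 := by rw [hB₀, Finset.card_erase_of_mem hcz]
        have h3 : (B.erase z).card = B.card - 1 := Finset.card_erase_of_mem hzB
        have hpos : 0 < (B.erase z).card := Finset.card_pos.mpr ⟨c, hcz⟩
        have hBpos : 0 < B.card := Finset.card_pos.mpr ⟨z, hzB⟩
        omega
    have hAle : A.card ≤ 2 ^ s := by
      rw [hAcard, hXcard]; omega
    -- A ∪ S = B
    have hBsplit : insert z (insert c B₀) = B := by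
      by_cases hc : c = z
      · rw [hB₀, hc, Finset.erase_idem, Finset.insert_erase hzB,
          Finset.insert_eq_self.mpr hzB]
      · rw [hB₀, Finset.insert_erase (Finset.mem_erase.mpr ⟨hc, hcB⟩),
          Finset.insert_erase hzB]
    have hASB : A ∪ S = B := by
      rw [hA, hS, Finset.insert_union, Finset.union_insert, hXY]
      exact hBsplit
    have hzA : z ∈ A := Finset.mem_insert_self z X
    have hcS : c ∈ S := Finset.mem_insert_self c Y
    -- choose s₀ and π
    have hex : ∃ s₀ ∈ S, (s₀ ≠ c ∨ S = {c}) := by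
      by_cases h : ∃ x ∈ S, x ≠ c
      · obtain ⟨x, hx1, hx2⟩ := h; exact ⟨x, hx1, Or.inl hx2⟩
      · push_neg at h
        exact ⟨c, hcS, Or.inr (Finset.eq_singleton_iff_unique_mem.mpr ⟨hcS, h⟩)⟩
    obtain ⟨s₀, hs₀S, hs₀⟩ := hex
    obtain ⟨π, hπim, hπz⟩ := exists_perm_image' hAS hzA hs₀S
    set τ : Equiv.Perm (Fin n) := π.trans υ with hτ
    have hτz : τ.symm z = π.symm c := by
      rw [hτ]; simp [hcdef]
    have hcImg : π.symm c ∈ A := by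
      have : c ∈ A.image ⇑π := hπim ▸ hcS
      obtain ⟨a, haA, ha⟩ := Finset.mem_image.mp this
      rwa [← ha, Equiv.symm_apply_apply]
    have hreach : ReachIn hn hn s (A.image (fun i => (i, τ i))) := by
      apply ih τ A hzA (hτz ▸ hcImg) hAle
      intro hteq
      have hπzc : π z = c := by
        rw [hτz] at hteq
        rw [← hteq, Equiv.apply_symm_apply]
      rcases hs₀ with h | h
      · exact absurd (hπz.symm.trans hπzc) h
      · have : S.card = 1 := by rw [h]; simp
        have hA1 : A.card = 1 := by rw [hAS, this]
        rcases Nat.eq_zero_or_pos s with rfl | hs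
        · exact Or.inr rfl
        · left
          have : 2 ≤ 2 ^ s := by
            calc 2 = 2 ^ 1 := by norm_num
            _ ≤ 2 ^ s := Nat.pow_le_pow_right (by norm_num) hs
          omega
    show ReachIn hn hn s (B.image fun i => (i, υ i)) ∨ _
    refine Or.inr ⟨A.image (fun i => (i, υ (π i))), ⇑π,
      (fun j => υ (π.symm (υ.symm j))), ?_, ?_⟩
    · exact hreach
    · rw [step_lemma υ π A]
      congr 1
      rw [hπim]
      exact hASB.symm

theorem stmt19 (n : ℕ) (hn : 0 < n) (σ : Equiv.Perm (Fin n)) :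
    Reach hn hn (Finset.univ.image (fun i => (i, σ i))) ∧
      ReachIn hn hn (Nat.clog 2 (n + 1))
        (Finset.univ.image (fun i => (i, σ i))) := by
  have hle : n + 1 ≤ 2 ^ Nat.clog 2 (n + 1) := Nat.le_pow_clog (by norm_num) _
  have h2 := reach_key hn (Nat.clog 2 (n + 1)) σ Finset.univ (Finset.mem_univ _)
    (Finset.mem_univ _) (by simp; omega) (fun _ => Or.inl (by simp; omega))
  exact ⟨reach_of_reachIn hn hn _ _ h2, h2⟩
end
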